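/- Let λ_1,…,λ_n denote the eigenvalues of C. Then for every A ∈ 𝒜, (1/n)·tr(Aᵀ Λ_σ C) ≤ (1/n)·Σ_{i=1}^n λ_i^{1/2}, the matrix A_* = Λ_σ^{-1} C^{-1/2} belongs to 𝒜 and attains this bound with equality, and A_* is the unique element of 𝒜 attaining it. -/

import Mathlib

open Matrix BigOperators

/-- The positive semidefinite square root of a positive semidefinite matrix
(the definition of `Matrix.PosSemidef.sqrt` in the older Mathlib, since removed). -/
noncomputable def Matrix.PosSemidef.sqrt {n : Type*} [Fintype n] [DecidableEq n]
    {A : Matrix n n ℝ} (hA : A.PosSemidef) : Matrix n n ℝ :=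
  hA.1.eigenvectorUnitary.1 * diagonal ((↑) ∘ (√·) ∘ hA.1.eigenvalues) *
  (star hA.1.eigenvectorUnitary : Matrix n n ℝ)

/-!
Put `M = C^{1/2}` and `B = M Λ_σ`. Since `Σ = Λ_σ C Λ_σ = Bᵀ B`, the constraint `Aᵀ Σ A = 1` says
that `Q = B A` is orthogonal, and the objective is `tr(Aᵀ Λ_σ C) = tr(Qᵀ M)`. For orthogonal `Q`
and symmetric `M` one has `2 (tr M - tr(Qᵀ M)) = tr((Q - 1) M (Q - 1)ᵀ)`, which is nonnegative
when `M` is positive definite and vanishes only for `Q = 1`, i.e. `A = B⁻¹ = Λ_σ⁻¹ C^{-1/2}`.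
Finally `tr M = Σ λ_i^{1/2}`.
-/

namespace Matrix

variable {m n : Type*} [Fintype m] [Fintype n]

namespace PosSemidef

variable [DecidableEq n] {A : Matrix n n ℝ} (hA : A.PosSemidef)

lemma sqrt_mul_sqrt : hA.sqrt * hA.sqrt = A := by
  set U : Matrix n n ℝ := hA.1.eigenvectorUnitary.1
  conv_rhs => rw [hA.1.spectral_theorem, Unitary.conjStarAlgAut_apply]
  calc hA.sqrt * hA.sqrt
      = U * (diagonal (fun i ↦ √(hA.1.eigenvalues i)) * (star U * U) *
          diagonal (fun i ↦ √(hA.1.eigenvalues i))) * star U := by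
        simp only [sqrt, Matrix.mul_assoc]; rfl
    _ = _ := by
      rw [Unitary.coe_star_mul_self, mul_one, diagonal_mul_diagonal]
      congr 3
      ext i
      simp [Real.mul_self_sqrt (hA.eigenvalues_nonneg i)]

lemma trace_sqrt : hA.sqrt.trace = ∑ i, √(hA.1.eigenvalues i) := by
  rw [sqrt, trace_mul_cycle, Unitary.coe_star_mul_self, one_mul, trace_diagonal]
  rfl

end PosSemidef

lemma PosDef.posDef_sqrt [DecidableEq n] {A : Matrix n n ℝ} (hA : A.PosDef) :
    hA.posSemidef.sqrt.PosDef :=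
  (IsUnit.posDef_star_right_conjugate_iff Unitary.isUnit_coe).mpr <|
    posDef_diagonal_iff.mpr fun i ↦ Real.sqrt_pos.mpr (hA.eigenvalues_pos i)

lemma isUnit_of_isUnit_inv_mul_mul_inv {α : Type*} [CommRing α] [DecidableEq n]
    {L S : Matrix n n α} (h : IsUnit (L⁻¹ * S * L⁻¹)) : IsUnit L := by
  rw [isUnit_iff_isUnit_det, det_mul, det_mul] at h
  rw [isUnit_iff_isUnit_det, ← isUnit_nonsing_inv_det_iff]
  exact isUnit_of_mul_isUnit_right h

lemma trace_mul_mul_transpose {α : Type*} [CommSemiring α] (X : Matrix m n α)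
    (M : Matrix n n α) : (X * M * Xᵀ).trace = ∑ i, X i ⬝ᵥ (M *ᵥ X i) := by
  refine Finset.sum_congr rfl fun i _ ↦ ?_
  simp only [diag_apply, mul_apply, transpose_apply, dotProduct, mulVec, Finset.sum_mul,
    Finset.mul_sum]
  rw [Finset.sum_comm]
  exact Finset.sum_congr rfl fun _ _ ↦ Finset.sum_congr rfl fun _ _ ↦ by ring

lemma PosDef.trace_mul_mul_transpose_eq_zero_iff {M : Matrix n n ℝ} (hM : M.PosDef)
    (X : Matrix m n ℝ) : (X * M * Xᵀ).trace = 0 ↔ X = 0 := by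
  have hterm (x : n → ℝ) : x ⬝ᵥ (M *ᵥ x) = 0 ↔ x = 0 := by
    refine ⟨fun h ↦ not_not.mp fun hx ↦ ?_, fun h ↦ by simp [h]⟩
    simpa [h] using hM.dotProduct_mulVec_pos hx
  rw [trace_mul_mul_transpose, Finset.sum_eq_zero_iff_of_nonneg fun i _ ↦ by
    simpa using hM.posSemidef.dotProduct_mulVec_nonneg (X i)]
  simp only [Finset.mem_univ, true_imp_iff, hterm]
  exact ⟨funext, fun h i ↦ congrFun h i⟩

variable [DecidableEq n] {M Q : Matrix n n ℝ}

lemma two_mul_trace_sub_trace_transpose_mul (hM : M.IsSymm) (hQ : Qᵀ * Q = 1) :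
    2 * (M.trace - (Qᵀ * M).trace) = ((Q - 1) * M * (Q - 1)ᵀ).trace := by
  have hQMQ : (Q * M * Qᵀ).trace = M.trace := by rw [trace_mul_cycle, hQ, Matrix.one_mul]
  have hQM : (Q * M).trace = (Qᵀ * M).trace := by
    rw [← trace_transpose, transpose_mul, hM.eq, trace_mul_comm]
  have hMQ : (M * Qᵀ).trace = (Qᵀ * M).trace := trace_mul_comm _ _
  simp only [transpose_sub, transpose_one, sub_mul, mul_sub, Matrix.one_mul, Matrix.mul_one,
    trace_sub, hQMQ, hQM, hMQ]
  ring

lemma PosDef.trace_transpose_mul_le (hM : M.PosDef) (hQ : Qᵀ * Q = 1) :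
    (Qᵀ * M).trace ≤ M.trace := by
  have hgap := two_mul_trace_sub_trace_transpose_mul (isHermitian_iff_isSymm.mp hM.1) hQ
  have hnonneg := (hM.posSemidef.mul_mul_conjTranspose_same (Q - 1)).trace_nonneg
  rw [conjTranspose_eq_transpose_of_trivial] at hnonneg
  linarith

lemma PosDef.trace_transpose_mul_eq_iff (hM : M.PosDef) (hQ : Qᵀ * Q = 1) :
    (Qᵀ * M).trace = M.trace ↔ Q = 1 := by
  rw [← sub_eq_zero (b := (1 : Matrix n n ℝ)), ← hM.trace_mul_mul_transpose_eq_zero_iff,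
    ← two_mul_trace_sub_trace_transpose_mul (isHermitian_iff_isSymm.mp hM.1) hQ]
  constructor <;> intro h <;> linarith

end Matrix

theorem stmt_3_general {n : ℕ}
    (S : Matrix (Fin n) (Fin n) ℝ)
    (Ls : Matrix (Fin n) (Fin n) ℝ)
    (hLs : Ls = Matrix.diagonal (fun i => Real.sqrt (S i i)))
    (C : Matrix (Fin n) (Fin n) ℝ) (hC : C = Ls⁻¹ * S * Ls⁻¹)
    (hCpd : C.PosDef)
    (Astar : Matrix (Fin n) (Fin n) ℝ)
    (hAstar : Astar = Ls⁻¹ * (hCpd.posSemidef.sqrt)⁻¹) :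
    (∀ A : Matrix (Fin n) (Fin n) ℝ, Aᵀ * S * A = 1 →
        (1 / (n : ℝ)) * (Aᵀ * Ls * C).trace
          ≤ (1 / (n : ℝ)) * ∑ i, Real.sqrt (hCpd.1.eigenvalues i)) ∧
    Astarᵀ * S * Astar = 1 ∧
    (1 / (n : ℝ)) * (Astarᵀ * Ls * C).trace
      = (1 / (n : ℝ)) * ∑ i, Real.sqrt (hCpd.1.eigenvalues i) ∧
    (∀ A : Matrix (Fin n) (Fin n) ℝ, Aᵀ * S * A = 1 →
        (1 / (n : ℝ)) * (Aᵀ * Ls * C).trace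
          = (1 / (n : ℝ)) * ∑ i, Real.sqrt (hCpd.1.eigenvalues i) →
        A = Astar) := by
  set M := hCpd.posSemidef.sqrt
  have hM : M.PosDef := hCpd.posDef_sqrt
  have hMM : M * M = C := hCpd.posSemidef.sqrt_mul_sqrt
  have hMsymm : M.IsSymm := isHermitian_iff_isSymm.mp hM.1
  have hLsymm : Ls.IsSymm := hLs ▸ isSymm_diagonal _
  have hLunit : IsUnit Ls := isUnit_of_isUnit_inv_mul_mul_inv (hC ▸ hCpd.isUnit)
  have hLdet : IsUnit Ls.det := (isUnit_iff_isUnit_det _).mp hLunit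
  have hS : S = Ls * C * Ls := by
    rw [hC, Matrix.mul_assoc, Matrix.mul_assoc, nonsing_inv_mul _ hLdet, mul_one,
      mul_nonsing_inv_cancel_left _ _ hLdet]
  set B := M * Ls
  have hconstr (A : Matrix (Fin n) (Fin n) ℝ) : Aᵀ * S * A = (B * A)ᵀ * (B * A) := by
    simp only [hS, ← hMM, B, transpose_mul, hMsymm.eq, hLsymm.eq, Matrix.mul_assoc]
  have hobj (A : Matrix (Fin n) (Fin n) ℝ) : Aᵀ * Ls * C = (B * A)ᵀ * M := by
    simp only [← hMM, B, transpose_mul, hMsymm.eq, hLsymm.eq, Matrix.mul_assoc]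
  have hAstarB : Astar = B⁻¹ := by rw [hAstar, Matrix.mul_inv_rev]
  have hBBinv : B * B⁻¹ = 1 :=
    mul_nonsing_inv _ ((isUnit_iff_isUnit_det _).mp (hM.isUnit.mul hLunit))
  have htrM : M.trace = ∑ i, √(hCpd.1.eigenvalues i) := hCpd.posSemidef.trace_sqrt
  simp only [hconstr, hobj, ← htrM]
  refine ⟨fun A hA ↦ mul_le_mul_of_nonneg_left (hM.trace_transpose_mul_le hA) (by positivity),
    ?_, ?_, fun A hA heq ↦ ?_⟩
  · rw [hAstarB, hBBinv, transpose_one, Matrix.one_mul]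
  · rw [hAstarB, hBBinv, transpose_one, Matrix.one_mul]
  · -- for `n = 0` the factor `1 / n` is `0`, but then all matrices coincide
    rcases Nat.eq_zero_or_pos n with rfl | hpos
    · exact Subsingleton.elim _ _
    · have hBA := (hM.trace_transpose_mul_eq_iff hA).mp (mul_left_cancel₀ (by positivity) heq)
      rw [hAstarB, inv_eq_right_inv hBA]

/-- **OASIS (equal weights).** For every `A ∈ 𝒜`, the average correlation
`(1/n)·tr(Aᵀ Λ_σ C)` is bounded by `(1/n)·Σ_i λ_i^{1/2}` where `λ_i` are the
eigenvalues of the correlation matrix `C`; the matrix `A_* = Λ_σ⁻¹ C^{-1/2}`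
belongs to `𝒜`, attains the bound, and is the unique element of `𝒜` doing so. -/
theorem stmt_3 {n : ℕ} (hn : 1 ≤ n)
    (S : Matrix (Fin n) (Fin n) ℝ) (hS : S.PosDef)
    (Ls : Matrix (Fin n) (Fin n) ℝ)
    (hLs : Ls = Matrix.diagonal (fun i => Real.sqrt (S i i)))
    (C : Matrix (Fin n) (Fin n) ℝ) (hC : C = Ls⁻¹ * S * Ls⁻¹)
    (hCpd : C.PosDef)
    (Astar : Matrix (Fin n) (Fin n) ℝ)
    (hAstar : Astar = Ls⁻¹ * (hCpd.posSemidef.sqrt)⁻¹) :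
    (∀ A : Matrix (Fin n) (Fin n) ℝ, Aᵀ * S * A = 1 →
        (1 / (n : ℝ)) * (Aᵀ * Ls * C).trace
          ≤ (1 / (n : ℝ)) * ∑ i, Real.sqrt (hCpd.1.eigenvalues i)) ∧
    Astarᵀ * S * Astar = 1 ∧
    (1 / (n : ℝ)) * (Astarᵀ * Ls * C).trace
      = (1 / (n : ℝ)) * ∑ i, Real.sqrt (hCpd.1.eigenvalues i) ∧
    (∀ A : Matrix (Fin n) (Fin n) ℝ, Aᵀ * S * A = 1 →
        (1 / (n : ℝ)) * (Aᵀ * Ls * C).trace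
          = (1 / (n : ℝ)) * ∑ i, Real.sqrt (hCpd.1.eigenvalues i) →
        A = Astar) :=
  stmt_3_general S Ls hLs C hC hCpd Astar hAstar
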